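/- Under the stated hypotheses, for every integer m with 1 ≤ m ≤ n and every choice of elements a_1, …, a_m ∈ A, if θ^{n-1}(s(a_1)) + θ^{n-2}(s(a_2)) + … + θ^{n-m}(s(a_m)) = 0 in M, then a_q = 0 for every 1 ≤ q ≤ m. (This is the module-theoretic core of the Lemma of Section 5: the vanishing of the relation Σ_q θ̃^{n-q-1}((s ⊗ Ω^q)(a_q)) = 0 forces all coefficients a_q to vanish, which yields the contradiction completing the proof of the injectivity of the maps α^j.) -/

import Mathlib

/-!
Write `T = Σ_q θ^{m-1-q}(s a_q)`, so the relation says `θ^{n-m} T = 0`. Because each `θ` maps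
`K i / K (i-1)` injectively to the next graded piece, `θ^j x ∈ K (n-1-j)` already forces
`x ∈ K (n-1)`; hence `T ∈ K (n-1)`. All terms of `T` but the last lie in `θ M ⊆ K (n-1)`, so
`s a_m ∈ K (n-1)` and `a_m = 0`. Dropping the last term, induction on `m` finishes.
-/

section Filtration

variable {R M : Type*} [Ring R] [AddCommGroup M] [Module R M]
  {K : ℕ → Submodule R M} {θ : M →ₗ[R] M} {n : ℕ}

theorem pow_apply_mem_sub (hθK : ∀ i, 1 ≤ i → i ≤ n → ∀ x ∈ K i, θ x ∈ K (i - 1))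
    {i j : ℕ} (hi : i ≤ n) (hj : j ≤ i) {x : M} (hx : x ∈ K i) :
    (θ ^ j) x ∈ K (i - j) := by
  induction j with
  | zero => simpa using hx
  | succ j ih =>
    rw [pow_succ', Module.End.mul_apply, ← Nat.sub_sub]
    exact hθK (i - j) (by omega) (by omega) _ (ih (by omega))

theorem mem_of_pow_apply_mem
    (hθK : ∀ i, 1 ≤ i → i ≤ n → ∀ x ∈ K i, θ x ∈ K (i - 1))
    (hθinj : ∀ i, 2 ≤ i → i ≤ n → ∀ x ∈ K i, θ x ∈ K (i - 2) → x ∈ K (i - 1))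
    {i j : ℕ} (hi : i ≤ n) (hj : j < i) {x : M} (hx : x ∈ K i)
    (h : (θ ^ j) x ∈ K (i - 1 - j)) : x ∈ K (i - 1) := by
  induction j with
  | zero => simpa using h
  | succ j ih =>
    refine ih (by omega) ?_
    rw [Nat.sub_right_comm]
    have hθj : (θ ^ j) x ∈ K (i - j) := pow_apply_mem_sub hθK hi (by omega) hx
    refine hθinj (i - j) (by omega) (by omega) _ hθj ?_
    rw [pow_succ', Module.End.mul_apply] at h
    rwa [show i - 1 - (j + 1) = i - j - 2 by omega] at h

end Filtration

section PowerSums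

variable {R M : Type*} [Ring R] [AddCommGroup M] [Module R M]

theorem sum_pow_sub_apply_eq_pow_apply_sum (θ : M →ₗ[R] M) {m N : ℕ} (hm : m ≤ N)
    (v : Fin (m + 1) → M) :
    ∑ q : Fin (m + 1), (θ ^ (N - q)) (v q)
      = (θ ^ (N - m)) (∑ q : Fin (m + 1), (θ ^ (m - q)) (v q)) := by
  rw [map_sum]
  refine Finset.sum_congr rfl fun q _ => ?_
  rw [← Module.End.mul_apply, ← pow_add, show N - m + (m - q) = N - q by omega]

theorem sum_pow_sub_apply_eq_last_add (θ : M →ₗ[R] M) {m : ℕ} (v : Fin (m + 1) → M) :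
    ∑ q : Fin (m + 1), (θ ^ (m - q)) (v q)
      = v (Fin.last m) + θ (∑ q : Fin m, (θ ^ (m - 1 - q)) (v q.castSucc)) := by
  rw [Fin.sum_univ_castSucc, add_comm, map_sum]
  simp only [Fin.val_last, Nat.sub_self, pow_zero, Module.End.one_apply, Fin.val_castSucc]
  congr 1
  refine Finset.sum_congr rfl fun q _ => ?_
  rw [← Module.End.mul_apply, ← pow_succ', show m - 1 - q + 1 = m - q by omega]

end PowerSums

section Relation

variable {R M A : Type*} [Ring R] [AddCommGroup M] [Module R M] [AddCommGroup A] [Module R A]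
  {K : ℕ → Submodule R M} {θ : M →ₗ[R] M} {n : ℕ} {s : A →ₗ[R] M}

theorem last_eq_zero_of_sum_pow_apply_eq_zero (hKn : K n = ⊤)
    (hθK : ∀ i, 1 ≤ i → i ≤ n → ∀ x ∈ K i, θ x ∈ K (i - 1))
    (hθinj : ∀ i, 2 ≤ i → i ≤ n → ∀ x ∈ K i, θ x ∈ K (i - 2) → x ∈ K (i - 1))
    (hs : ∀ a : A, s a ∈ K (n - 1) → a = 0) {m : ℕ} (hm : m < n) (a : Fin (m + 1) → A)
    (hsum : ∑ q : Fin (m + 1), (θ ^ (n - 1 - q)) (s (a q)) = 0) : a (Fin.last m) = 0 := by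
  have hT : ∑ q : Fin (m + 1), (θ ^ (m - q)) (s (a q)) ∈ K (n - 1) := by
    refine mem_of_pow_apply_mem hθK hθinj le_rfl (j := n - 1 - m) (by omega) (hKn ▸ trivial) ?_
    rw [← sum_pow_sub_apply_eq_pow_apply_sum θ (by omega), hsum]
    exact zero_mem _
  rw [sum_pow_sub_apply_eq_last_add] at hT
  exact hs _ ((Submodule.add_mem_iff_left _ (hθK n (by omega) le_rfl _ (hKn ▸ trivial))).mp hT)

theorem eq_zero_of_sum_pow_apply_eq_zero (hKn : K n = ⊤)
    (hθK : ∀ i, 1 ≤ i → i ≤ n → ∀ x ∈ K i, θ x ∈ K (i - 1))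
    (hθinj : ∀ i, 2 ≤ i → i ≤ n → ∀ x ∈ K i, θ x ∈ K (i - 2) → x ∈ K (i - 1))
    (hs : ∀ a : A, s a ∈ K (n - 1) → a = 0) {m : ℕ} (hm : m ≤ n) (a : Fin m → A)
    (hsum : ∑ q : Fin m, (θ ^ (n - 1 - q)) (s (a q)) = 0) : a = 0 := by
  induction m with
  | zero => exact Subsingleton.elim _ _
  | succ m ih =>
    have hlast := last_eq_zero_of_sum_pow_apply_eq_zero hKn hθK hθinj hs hm a hsum
    rw [Fin.sum_univ_castSucc, hlast, map_zero, map_zero, add_zero] at hsum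
    have hinit : a ∘ Fin.castSucc = 0 := ih (by omega) _ hsum
    funext q
    induction q using Fin.lastCases with
    | last => exact hlast
    | cast q => exact congrFun hinit q

end Relation

theorem drinfeld_laumon_relation_forces_vanishing_general
    {R M A : Type*} [Ring R] [AddCommGroup M] [Module R M]
    [AddCommGroup A] [Module R A]
    (n : ℕ)
    (K : ℕ → Submodule R M) (hKn : K n = ⊤)
    (θ : M →ₗ[R] M)
    (hθK : ∀ i, 1 ≤ i → i ≤ n → ∀ x ∈ K i, θ x ∈ K (i - 1))
    (hθinj : ∀ i, 2 ≤ i → i ≤ n → ∀ x ∈ K i, θ x ∈ K (i - 2) → x ∈ K (i - 1))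
    (s : A →ₗ[R] M) (hs : ∀ a : A, s a ∈ K (n - 1) → a = 0) :
    ∀ m : ℕ, 1 ≤ m → m ≤ n → ∀ a : Fin m → A,
      (∑ q : Fin m, (θ ^ (n - 1 - (q : ℕ))) (s (a q)) = 0) →
      ∀ q : Fin m, a q = 0 := fun _ _ hm a hsum q =>
  congrFun (eq_zero_of_sum_pow_apply_eq_zero hKn hθK hθinj hs hm a hsum) q

/-- Module-theoretic core of the Lemma of Section 5 of
"Finite local systems in the Drinfeld-Laumon construction":
given a filtration `0 = K 0 ⊆ K 1 ⊆ … ⊆ K n = M` of an `R`-module `M`,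
an endomorphism `θ` with `θ (K i) ⊆ K (i-1)` inducing injective maps
`K i / K (i-1) → K (i-1) / K (i-2)`, and a map `s : A → M` injective modulo
`K (n-1)`, the vanishing of `θ^{n-1}(s a₁) + θ^{n-2}(s a₂) + … + θ^{n-m}(s aₘ)`
forces all the `a_q` to vanish. -/
theorem drinfeld_laumon_relation_forces_vanishing
    {R M A : Type*} [Ring R] [AddCommGroup M] [Module R M]
    [AddCommGroup A] [Module R A]
    (n : ℕ) (hn : 1 ≤ n)
    (K : ℕ → Submodule R M) (hK0 : K 0 = ⊥) (hKn : K n = ⊤)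
    (hmono : ∀ i < n, K i ≤ K (i + 1))
    (θ : M →ₗ[R] M)
    (hθK : ∀ i, 1 ≤ i → i ≤ n → ∀ x ∈ K i, θ x ∈ K (i - 1))
    (hθinj : ∀ i, 2 ≤ i → i ≤ n → ∀ x ∈ K i, θ x ∈ K (i - 2) → x ∈ K (i - 1))
    (s : A →ₗ[R] M) (hs : ∀ a : A, s a ∈ K (n - 1) → a = 0) :
    ∀ m : ℕ, 1 ≤ m → m ≤ n → ∀ a : Fin m → A,
      (∑ q : Fin m, (θ ^ (n - 1 - (q : ℕ))) (s (a q)) = 0) →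
      ∀ q : Fin m, a q = 0 :=
  drinfeld_laumon_relation_forces_vanishing_general n K hKn θ hθK hθinj s hs
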